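/- arXiv:2105.03737 — 3 statements merged into one kernel-verified Lean document; each statement's English description precedes it below -/
import Mathlib

section
/- Identification of the Switching Effect: fix an exposure level h̄ ∈ H with P(D=1, h=h̄) > 0 and P(D=0, h=h̄) > 0, and define the average switching effect τ_switch(h̄) := E[Y_1(1,h̄) − Y_1(0,h̄) | D=1, h=h̄]. If No Anticipation holds and the Switching-Effect Parallel Trends condition holds at h̄, namely E[Y_1(0,h̄) − Y_0(0,0) | D=1, h=h̄] = E[Y_1(0,h̄) − Y_0(0,0) | D=0, h=h̄], then τ_switch(h̄) = E[Y_1^obs − Y_0^obs | D=1, h=h̄] − E[Y_1^obs − Y_0^obs | D=0, h=h̄]. -/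
open MeasureTheory

/-- Conditional mean of `X` given the event `A`: `E[X | A] = (1/P(A)) ∫_A X dP`. -/
noncomputable def condMean {Ω : Type*} [MeasurableSpace Ω] (P : Measure Ω)
    (A : Set Ω) (X : Ω → ℝ) : ℝ :=
  (P A).toReal⁻¹ * ∫ ω in A, X ω ∂P

/-
Under No Anticipation the observed before/after difference on the cell `{D = d, h = e}` is
`Y₁(d, e) - Y₀(0, 0)`. Hence the treated cell identifies `E[Y₁(1, h̄) - Y₀(0, 0) | D = 1, h = h̄]`,
the control cell identifies `E[Y₁(0, h̄) - Y₀(0, 0) | D = 0, h = h̄]`, and parallel trends moves the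
latter onto the treated cell, where linearity of the conditional mean cancels `Y₀(0, 0)`.
-/

section CondMean

variable {Ω : Type*} [MeasurableSpace Ω] {μ : Measure Ω} {s : Set Ω}

/-- For non-measurable `s`, `μ.restrict s` need not be concentrated on `s`; a superset of `s`
that is null-measurable for `μ.restrict s` is nevertheless conull. -/
theorem ae_restrict_mem_of_subset_of_nullMeasurableSet {t : Set Ω} (hst : s ⊆ t)
    (ht : NullMeasurableSet t (μ.restrict s)) : ∀ᵐ x ∂μ.restrict s, x ∈ t := by
  obtain ⟨m, hmt, hm, hm_ae⟩ := ht.exists_measurable_subset_ae_eq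
  have hdiff : μ.restrict s (t \ m) = 0 := (ae_eq_set.mp hm_ae).2
  have hcompl : μ.restrict s mᶜ = 0 := by
    rw [Measure.restrict_apply hm.compl, ← nonpos_iff_eq_zero]
    calc μ (mᶜ ∩ s) ≤ μ (t \ m ∩ s) := measure_mono fun x ⟨hxm, hxs⟩ => ⟨⟨hst hxs, hxm⟩, hxs⟩
      _ ≤ μ.restrict s (t \ m) := Measure.le_restrict_apply s (t \ m)
      _ = 0 := hdiff
  exact (measure_eq_zero_iff_ae_notMem.mp hcompl).mono fun x hx => hmt (not_not.mp hx)

theorem setIntegral_congr_of_eqOn {E : Type*} [NormedAddCommGroup E] [NormedSpace ℝ E]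
    {f g : Ω → E} (hf : AEStronglyMeasurable f (μ.restrict s))
    (hg : AEStronglyMeasurable g (μ.restrict s)) (hfg : s.EqOn f g) :
    ∫ x in s, f x ∂μ = ∫ x in s, g x ∂μ :=
  integral_congr_ae <|
    ae_restrict_mem_of_subset_of_nullMeasurableSet hfg (hf.nullMeasurableSet_eq_fun hg)

theorem condMean_congr {f g : Ω → ℝ} (hf : AEStronglyMeasurable f (μ.restrict s))
    (hg : AEStronglyMeasurable g (μ.restrict s)) (hfg : s.EqOn f g) :
    condMean μ s f = condMean μ s g := by
  rw [condMean, condMean, setIntegral_congr_of_eqOn hf hg hfg]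

theorem condMean_sub {f g : Ω → ℝ} (hf : IntegrableOn f s μ) (hg : IntegrableOn g s μ) :
    condMean μ s (fun x => f x - g x) = condMean μ s f - condMean μ s g := by
  rw [condMean, condMean, condMean, integral_sub hf hg, mul_sub]

end CondMean

theorem condMean_obsDiff_eq_of_noAnticipation {Ω : Type*} [MeasurableSpace Ω] (P : Measure Ω)
    {H : Type*} [Zero H] (D : Ω → Fin 2) (h : Ω → H) (Y : Fin 2 → Fin 2 → H → Ω → ℝ)
    (hIntArm : ∀ (t d : Fin 2) (e : H), Integrable (Y t d e) P)
    (hIntObs : ∀ t : Fin 2, Integrable (fun ω => Y t (D ω) (h ω) ω) P)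
    (hNoAnt : ∀ (d : Fin 2) (e : H) (ω : Ω), Y 0 d e ω = Y 0 0 0 ω) (d : Fin 2) (e : H) :
    condMean P {ω | D ω = d ∧ h ω = e} (fun ω => Y 1 (D ω) (h ω) ω - Y 0 (D ω) (h ω) ω)
      = condMean P {ω | D ω = d ∧ h ω = e} (fun ω => Y 1 d e ω - Y 0 0 0 ω) := by
  refine condMean_congr ((hIntObs 1).sub (hIntObs 0)).aestronglyMeasurable.restrict
    ((hIntArm 1 d e).sub (hIntArm 0 0 0)).aestronglyMeasurable.restrict ?_
  rintro ω ⟨hd, he⟩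
  simp only [hd, he, hNoAnt d e ω]

theorem switching_effect_identification_general
    {Ω : Type*} [MeasurableSpace Ω] (P : Measure Ω)
    {H : Type*} [Zero H]
    (D : Ω → Fin 2) (h : Ω → H)
    (Y : Fin 2 → Fin 2 → H → Ω → ℝ)
    (hbar : H)
    -- integrability of all random variables appearing in the stated expectations
    (hIntArm : ∀ (t d : Fin 2) (e : H), Integrable (Y t d e) P)
    (hIntObs : ∀ t : Fin 2, Integrable (fun ω => Y t (D ω) (h ω) ω) P)
    -- No Anticipation
    (hNoAnt : ∀ (d : Fin 2) (e : H) (ω : Ω), Y 0 d e ω = Y 0 0 0 ω)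
    -- Switching-Effect Parallel Trends at exposure hbar
    (hPT : condMean P {ω | D ω = 1 ∧ h ω = hbar} (fun ω => Y 1 0 hbar ω - Y 0 0 0 ω)
         = condMean P {ω | D ω = 0 ∧ h ω = hbar} (fun ω => Y 1 0 hbar ω - Y 0 0 0 ω)) :
    condMean P {ω | D ω = 1 ∧ h ω = hbar} (fun ω => Y 1 1 hbar ω - Y 1 0 hbar ω)
    = condMean P {ω | D ω = 1 ∧ h ω = hbar}
        (fun ω => Y 1 (D ω) (h ω) ω - Y 0 (D ω) (h ω) ω)
      - condMean P {ω | D ω = 0 ∧ h ω = hbar}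
        (fun ω => Y 1 (D ω) (h ω) ω - Y 0 (D ω) (h ω) ω) := by
  have hArm (d : Fin 2) : IntegrableOn (fun ω => Y 1 d hbar ω - Y 0 0 0 ω)
      {ω | D ω = 1 ∧ h ω = hbar} P :=
    ((hIntArm 1 d hbar).sub (hIntArm 0 0 0)).integrableOn
  rw [condMean_obsDiff_eq_of_noAnticipation P D h Y hIntArm hIntObs hNoAnt,
    condMean_obsDiff_eq_of_noAnticipation P D h Y hIntArm hIntObs hNoAnt, ← hPT,
    ← condMean_sub (hArm 1) (hArm 0)]
  congr 1
  funext ω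
  ring

/-- Identification of the switching effect at exposure level `h̄` under
No Anticipation and Switching-Effect Parallel Trends. -/
theorem switching_effect_identification
    {Ω : Type*} [MeasurableSpace Ω] (P : Measure Ω) [IsProbabilityMeasure P]
    {H : Type*} [Zero H]
    (D : Ω → Fin 2) (h : Ω → H)
    (Y : Fin 2 → Fin 2 → H → Ω → ℝ)
    (hbar : H)
    (hD1 : 0 < P {ω | D ω = 1 ∧ h ω = hbar})
    (hD0 : 0 < P {ω | D ω = 0 ∧ h ω = hbar})
    -- integrability of all random variables appearing in the stated expectations
    (hIntArm : ∀ (t d : Fin 2) (e : H), Integrable (Y t d e) P)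
    (hIntObs : ∀ t : Fin 2, Integrable (fun ω => Y t (D ω) (h ω) ω) P)
    -- No Anticipation
    (hNoAnt : ∀ (d : Fin 2) (e : H) (ω : Ω), Y 0 d e ω = Y 0 0 0 ω)
    -- Switching-Effect Parallel Trends at exposure hbar
    (hPT : condMean P {ω | D ω = 1 ∧ h ω = hbar} (fun ω => Y 1 0 hbar ω - Y 0 0 0 ω)
         = condMean P {ω | D ω = 0 ∧ h ω = hbar} (fun ω => Y 1 0 hbar ω - Y 0 0 0 ω)) :
    condMean P {ω | D ω = 1 ∧ h ω = hbar} (fun ω => Y 1 1 hbar ω - Y 1 0 hbar ω)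
    = condMean P {ω | D ω = 1 ∧ h ω = hbar}
        (fun ω => Y 1 (D ω) (h ω) ω - Y 0 (D ω) (h ω) ω)
      - condMean P {ω | D ω = 0 ∧ h ω = hbar}
        (fun ω => Y 1 (D ω) (h ω) ω - Y 0 (D ω) (h ω) ω) :=
  switching_effect_identification_general P D h Y hbar hIntArm hIntObs hNoAnt hPT
end

section
/- Identification of the direct contrast on unexposed treated units: suppose S : Ω → {0,1} is a measurable spillover-region indicator satisfying locality (S(ω) = 0 implies h(ω) = 0), with P(D=1, S=0) > 0 and P(D=0, S=0) > 0. If No Anticipation and Cell Parallel Trends hold, then E[Y_1^obs − Y_0^obs | D=1, S=0] − E[Y_1^obs − Y_0^obs | D=0, S=0] = E[Y_1(1,0) − Y_1(0,0) | D=1, S=0]. -/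
open MeasureTheory

lemma ae_restrict_eq_of_eqOn {Ω : Type*} [MeasurableSpace Ω] {P : Measure Ω}
    {f g : Ω → ℝ} (hf : AEStronglyMeasurable f P) (hg : AEStronglyMeasurable g P)
    {s : Set Ω} (h : ∀ ω ∈ s, f ω = g ω) : f =ᵐ[P.restrict s] g := by
  have hf' := hf.ae_eq_mk
  have hg' := hg.ae_eq_mk
  have hmeas : MeasurableSet {ω | hf.mk f ω = hg.mk g ω} :=
    measurableSet_eq_fun hf.measurable_mk hg.measurable_mk
  have hnull : P {ω | ¬ (f ω = hf.mk f ω ∧ g ω = hg.mk g ω)} = 0 :=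
    ae_iff.mp (hf'.and hg')
  have key : hf.mk f =ᵐ[P.restrict s] hg.mk g := by
    rw [Filter.EventuallyEq, ae_iff,
      show {a | ¬ hf.mk f a = hg.mk g a} = {ω | hf.mk f ω = hg.mk g ω}ᶜ from rfl,
      Measure.restrict_apply hmeas.compl]
    refine measure_mono_null ?_ hnull
    intro ω hω
    simp only [Set.mem_inter_iff, Set.mem_compl_iff, Set.mem_setOf_eq] at hω ⊢
    intro hc
    exact hω.1 (hc.1 ▸ hc.2 ▸ h ω hω.2)
  exact Filter.EventuallyEq.trans (Filter.EventuallyEq.trans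
    (ae_restrict_of_ae hf') key) (Filter.EventuallyEq.symm (ae_restrict_of_ae hg'))

/-- Identification of the direct contrast on unexposed treated units. -/
theorem direct_contrast_identification
    {Ω : Type*} [MeasurableSpace Ω] (P : Measure Ω) [IsProbabilityMeasure P]
    {H : Type*} [Zero H]
    (D : Ω → Fin 2) (h : Ω → H) (S : Ω → Fin 2)
    (Y : Fin 2 → Fin 2 → H → Ω → ℝ)
    (hSmeas : Measurable S)
    -- spillovers are local: unexposed outside the spillover region
    (hLocal : ∀ ω, S ω = 0 → h ω = 0)
    (hD1 : 0 < P {ω | D ω = 1}) (hD0 : 0 < P {ω | D ω = 0})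
    (hD1S0 : 0 < P {ω | D ω = 1 ∧ S ω = 0})
    (hD0S0 : 0 < P {ω | D ω = 0 ∧ S ω = 0})
    -- integrability of all random variables appearing in the stated expectations
    (hIntArm : ∀ (t d : Fin 2) (e : H), Integrable (Y t d e) P)
    (hIntObs : ∀ t : Fin 2, Integrable (fun ω => Y t (D ω) (h ω) ω) P)
    -- No Anticipation
    (hNoAnt : ∀ (d : Fin 2) (e : H) (ω : Ω), Y 0 d e ω = Y 0 0 0 ω)
    -- Cell Parallel Trends
    (hPT : ∀ d s : Fin 2, 0 < P {ω | D ω = d ∧ S ω = s} →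
        condMean P {ω | D ω = d ∧ S ω = s} (fun ω => Y 1 0 0 ω - Y 0 0 0 ω)
        = ∫ ω, (Y 1 0 0 ω - Y 0 0 0 ω) ∂P) :
    condMean P {ω | D ω = 1 ∧ S ω = 0}
        (fun ω => Y 1 (D ω) (h ω) ω - Y 0 (D ω) (h ω) ω)
      - condMean P {ω | D ω = 0 ∧ S ω = 0}
          (fun ω => Y 1 (D ω) (h ω) ω - Y 0 (D ω) (h ω) ω)
    = condMean P {ω | D ω = 1 ∧ S ω = 0} (fun ω => Y 1 1 0 ω - Y 1 0 0 ω) := by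
  have hf : Integrable (fun ω => Y 1 (D ω) (h ω) ω - Y 0 (D ω) (h ω) ω) P :=
    (hIntObs 1).sub (hIntObs 0)
  have hInt1 : Integrable (fun ω => Y 1 1 0 ω - Y 1 0 0 ω) P :=
    (hIntArm 1 1 0).sub (hIntArm 1 0 0)
  have hInt2 : Integrable (fun ω => Y 1 0 0 ω - Y 0 0 0 ω) P :=
    (hIntArm 1 0 0).sub (hIntArm 0 0 0)
  have e1 : (fun ω => Y 1 (D ω) (h ω) ω - Y 0 (D ω) (h ω) ω)
      =ᵐ[P.restrict {ω | D ω = 1 ∧ S ω = 0}]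
      (fun ω => (Y 1 1 0 ω - Y 1 0 0 ω) + (Y 1 0 0 ω - Y 0 0 0 ω)) := by
    refine ae_restrict_eq_of_eqOn hf.1 (hInt1.add hInt2).1 ?_
    intro ω hω
    obtain ⟨hD, hS⟩ := hω
    rw [hD, hLocal ω hS, hNoAnt 1 0 ω]
    simp only [Pi.add_apply]
    ring
  have e0 : (fun ω => Y 1 (D ω) (h ω) ω - Y 0 (D ω) (h ω) ω)
      =ᵐ[P.restrict {ω | D ω = 0 ∧ S ω = 0}]
      (fun ω => Y 1 0 0 ω - Y 0 0 0 ω) := by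
    refine ae_restrict_eq_of_eqOn hf.1 hInt2.1 ?_
    intro ω hω
    obtain ⟨hD, hS⟩ := hω
    rw [hD, hLocal ω hS, hNoAnt 0 0 ω]
  have hA1 : condMean P {ω | D ω = 1 ∧ S ω = 0}
      (fun ω => Y 1 (D ω) (h ω) ω - Y 0 (D ω) (h ω) ω)
      = condMean P {ω | D ω = 1 ∧ S ω = 0} (fun ω => Y 1 1 0 ω - Y 1 0 0 ω)
        + condMean P {ω | D ω = 1 ∧ S ω = 0} (fun ω => Y 1 0 0 ω - Y 0 0 0 ω) := by
    unfold condMean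
    rw [integral_congr_ae e1, integral_add hInt1.integrableOn hInt2.integrableOn]
    ring
  have hA0 : condMean P {ω | D ω = 0 ∧ S ω = 0}
      (fun ω => Y 1 (D ω) (h ω) ω - Y 0 (D ω) (h ω) ω)
      = condMean P {ω | D ω = 0 ∧ S ω = 0} (fun ω => Y 1 0 0 ω - Y 0 0 0 ω) := by
    unfold condMean
    rw [integral_congr_ae e0]
  have hP1 := hPT 1 0 hD1S0
  have hP0 := hPT 0 0 hD0S0
  rw [hA1, hA0, hP1, hP0]
  ring
end

section
/- Identification of the average spillover effect on exposed treated units (the population coefficient γ_1 in the modified two-way fixed-effects model): suppose S : Ω → {0,1} is a measurable spillover-region indicator satisfying locality (S(ω) = 0 implies h(ω) = 0), with P(D=1, S=1) > 0 and P(D=1, S=0) > 0. If No Anticipation, Cell Parallel Trends, and Homogeneity of the Direct Effect across S hold, then E[Y_1^obs − Y_0^obs | D=1, S=1] − E[Y_1^obs − Y_0^obs | D=1, S=0] = E[Y_1(1, h(·))(·) − Y_1(1,0)(·) | D=1, S=1]. -/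
/-
On the treated cells the observed trend splits, by No Anticipation, into spillover + direct effect
+ untreated trend, where the spillover term vanishes outside the spillover region by locality.
Homogeneity and Cell Parallel Trends make the direct-effect and trend terms equal across the two
cells, so they cancel in the difference.
-/

open MeasureTheory

section CondMean

variable {Ω : Type*} [MeasurableSpace Ω] {P : Measure Ω} {A : Set Ω}

/-- No measurability of `A` is needed: `{f = g}` is null-measurable. -/
theorem ae_restrict_eq_of_eqOn_s9 {E : Type*} [TopologicalSpace E]
    [TopologicalSpace.MetrizableSpace E] {f g : Ω → E}
    (hf : AEStronglyMeasurable f (P.restrict A))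
    (hg : AEStronglyMeasurable g (P.restrict A)) (hfg : Set.EqOn f g A) :
    f =ᵐ[P.restrict A] g :=
  (ae_restrict_iff₀ (hf.nullMeasurableSet_eq_fun hg)).2 (ae_of_all _ hfg)

theorem condMean_congr_of_eqOn {f g : Ω → ℝ} (hf : AEStronglyMeasurable f (P.restrict A))
    (hg : AEStronglyMeasurable g (P.restrict A)) (hfg : Set.EqOn f g A) :
    condMean P A f = condMean P A g := by
  rw [condMean, condMean, integral_congr_ae (ae_restrict_eq_of_eqOn_s9 hf hg hfg)]

theorem condMean_add {f g : Ω → ℝ} (hf : IntegrableOn f A P) (hg : IntegrableOn g A P) :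
    condMean P A (fun ω => f ω + g ω) = condMean P A f + condMean P A g := by
  rw [condMean, condMean, condMean, integral_add hf hg, mul_add]

theorem condMean_eq_add_of_eqOn {f g k : Ω → ℝ} (hf : AEStronglyMeasurable f (P.restrict A))
    (hg : IntegrableOn g A P) (hk : IntegrableOn k A P) (hfgk : ∀ ω ∈ A, f ω = g ω + k ω) :
    condMean P A f = condMean P A g + condMean P A k := by
  rw [← condMean_add hg hk]
  exact condMean_congr_of_eqOn hf (hg.add hk).1 hfgk

end CondMean

theorem spillover_on_treated_identification_general
    {Ω : Type*} [MeasurableSpace Ω] (P : Measure Ω)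
    {H : Type*} [Zero H]
    (D : Ω → Fin 2) (h : Ω → H) (S : Ω → Fin 2)
    (Y : Fin 2 → Fin 2 → H → Ω → ℝ)
    -- spillovers are local: unexposed outside the spillover region
    (hLocal : ∀ ω, S ω = 0 → h ω = 0)
    (hD1S1 : 0 < P {ω | D ω = 1 ∧ S ω = 1})
    (hD1S0 : 0 < P {ω | D ω = 1 ∧ S ω = 0})
    -- integrability of all random variables appearing in the stated expectations
    (hIntArm : ∀ (t d : Fin 2) (e : H), Integrable (Y t d e) P)
    (hIntObs : ∀ t : Fin 2, Integrable (fun ω => Y t (D ω) (h ω) ω) P)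
    (hIntExp : ∀ d : Fin 2, Integrable (fun ω => Y 1 d (h ω) ω) P)
    -- No Anticipation
    (hNoAnt : ∀ (d : Fin 2) (e : H) (ω : Ω), Y 0 d e ω = Y 0 0 0 ω)
    -- Cell Parallel Trends
    (hPT : ∀ d s : Fin 2, 0 < P {ω | D ω = d ∧ S ω = s} →
        condMean P {ω | D ω = d ∧ S ω = s} (fun ω => Y 1 0 0 ω - Y 0 0 0 ω)
        = ∫ ω, (Y 1 0 0 ω - Y 0 0 0 ω) ∂P)
    -- Homogeneity of the direct effect across S
    (hHom : ∀ s : Fin 2, 0 < P {ω | D ω = 1 ∧ S ω = s} →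
        condMean P {ω | D ω = 1 ∧ S ω = s} (fun ω => Y 1 1 0 ω - Y 1 0 0 ω)
        = condMean P {ω | D ω = 1} (fun ω => Y 1 1 0 ω - Y 1 0 0 ω)) :
    condMean P {ω | D ω = 1 ∧ S ω = 1}
        (fun ω => Y 1 (D ω) (h ω) ω - Y 0 (D ω) (h ω) ω)
      - condMean P {ω | D ω = 1 ∧ S ω = 0}
          (fun ω => Y 1 (D ω) (h ω) ω - Y 0 (D ω) (h ω) ω)
    = condMean P {ω | D ω = 1 ∧ S ω = 1} (fun ω => Y 1 1 (h ω) ω - Y 1 1 0 ω) := by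
  have hObs : AEStronglyMeasurable (fun ω => Y 1 (D ω) (h ω) ω - Y 0 (D ω) (h ω) ω) P :=
    ((hIntObs 1).sub (hIntObs 0)).1
  have hSpill : Integrable (fun ω => Y 1 1 (h ω) ω - Y 1 1 0 ω) P :=
    (hIntExp 1).sub (hIntArm 1 1 0)
  have hDirect : Integrable (fun ω => Y 1 1 0 ω - Y 1 0 0 ω) P :=
    (hIntArm 1 1 0).sub (hIntArm 1 0 0)
  have hTrend : Integrable (fun ω => Y 1 0 0 ω - Y 0 0 0 ω) P :=
    (hIntArm 1 0 0).sub (hIntArm 0 0 0)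
  have hObs1 : condMean P {ω | D ω = 1 ∧ S ω = 1}
      (fun ω => Y 1 (D ω) (h ω) ω - Y 0 (D ω) (h ω) ω)
      = condMean P {ω | D ω = 1 ∧ S ω = 1} (fun ω => Y 1 1 (h ω) ω - Y 1 1 0 ω)
        + (condMean P {ω | D ω = 1 ∧ S ω = 1} (fun ω => Y 1 1 0 ω - Y 1 0 0 ω)
          + condMean P {ω | D ω = 1 ∧ S ω = 1} (fun ω => Y 1 0 0 ω - Y 0 0 0 ω)) := by
    rw [← condMean_add hDirect.integrableOn hTrend.integrableOn]
    refine condMean_eq_add_of_eqOn hObs.restrict hSpill.integrableOn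
      (hDirect.add hTrend).integrableOn fun ω ⟨hD, _⟩ => ?_
    simp only [hD, hNoAnt 1 (h ω) ω]
    ring
  have hObs0 : condMean P {ω | D ω = 1 ∧ S ω = 0}
      (fun ω => Y 1 (D ω) (h ω) ω - Y 0 (D ω) (h ω) ω)
      = condMean P {ω | D ω = 1 ∧ S ω = 0} (fun ω => Y 1 1 0 ω - Y 1 0 0 ω)
        + condMean P {ω | D ω = 1 ∧ S ω = 0} (fun ω => Y 1 0 0 ω - Y 0 0 0 ω) := by
    refine condMean_eq_add_of_eqOn hObs.restrict hDirect.integrableOn hTrend.integrableOn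
      fun ω ⟨hD, hS⟩ => ?_
    simp only [hD, hLocal ω hS, hNoAnt 1 0 ω]
    ring
  rw [hObs1, hObs0, hHom 1 hD1S1, hHom 0 hD1S0, hPT 1 1 hD1S1, hPT 1 0 hD1S0]
  ring

/-- Identification of the average spillover effect on exposed treated units
(the population coefficient `γ_1` in the modified TWFE model). -/
theorem spillover_on_treated_identification
    {Ω : Type*} [MeasurableSpace Ω] (P : Measure Ω) [IsProbabilityMeasure P]
    {H : Type*} [Zero H]
    (D : Ω → Fin 2) (h : Ω → H) (S : Ω → Fin 2)
    (Y : Fin 2 → Fin 2 → H → Ω → ℝ)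
    (hSmeas : Measurable S)
    -- spillovers are local: unexposed outside the spillover region
    (hLocal : ∀ ω, S ω = 0 → h ω = 0)
    (hD1 : 0 < P {ω | D ω = 1}) (hD0 : 0 < P {ω | D ω = 0})
    (hD1S1 : 0 < P {ω | D ω = 1 ∧ S ω = 1})
    (hD1S0 : 0 < P {ω | D ω = 1 ∧ S ω = 0})
    -- integrability of all random variables appearing in the stated expectations
    (hIntArm : ∀ (t d : Fin 2) (e : H), Integrable (Y t d e) P)
    (hIntObs : ∀ t : Fin 2, Integrable (fun ω => Y t (D ω) (h ω) ω) P)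
    (hIntExp : ∀ d : Fin 2, Integrable (fun ω => Y 1 d (h ω) ω) P)
    -- No Anticipation
    (hNoAnt : ∀ (d : Fin 2) (e : H) (ω : Ω), Y 0 d e ω = Y 0 0 0 ω)
    -- Cell Parallel Trends
    (hPT : ∀ d s : Fin 2, 0 < P {ω | D ω = d ∧ S ω = s} →
        condMean P {ω | D ω = d ∧ S ω = s} (fun ω => Y 1 0 0 ω - Y 0 0 0 ω)
        = ∫ ω, (Y 1 0 0 ω - Y 0 0 0 ω) ∂P)
    -- Homogeneity of the direct effect across S
    (hHom : ∀ s : Fin 2, 0 < P {ω | D ω = 1 ∧ S ω = s} →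
        condMean P {ω | D ω = 1 ∧ S ω = s} (fun ω => Y 1 1 0 ω - Y 1 0 0 ω)
        = condMean P {ω | D ω = 1} (fun ω => Y 1 1 0 ω - Y 1 0 0 ω)) :
    condMean P {ω | D ω = 1 ∧ S ω = 1}
        (fun ω => Y 1 (D ω) (h ω) ω - Y 0 (D ω) (h ω) ω)
      - condMean P {ω | D ω = 1 ∧ S ω = 0}
          (fun ω => Y 1 (D ω) (h ω) ω - Y 0 (D ω) (h ω) ω)
    = condMean P {ω | D ω = 1 ∧ S ω = 1} (fun ω => Y 1 1 (h ω) ω - Y 1 1 0 ω) :=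
  spillover_on_treated_identification_general P D h S Y hLocal hD1S1 hD1S0 hIntArm hIntObs hIntExp
    hNoAnt hPT hHom
end
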